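/- Let F ⊆ F′ be finite sets of primes, u a function on the critical line, and ξ ∈ H²(ℂ₊) (the Hardy space of the right half-plane Re(z) > 1/2, viewed inside L² of the critical line) such that u·ξ ∈ H²(ℂ₋). Set D = Π_{p ∈ F′∖F}(1 − p^{−z}) and N = Π_{p ∈ F′∖F}(1 − p^{z−1}). Then D ∈ H^∞(ℂ₊), N ∈ H^∞(ℂ₋), D·ξ ∈ H²(ℂ₊), and (u·N/D)·(D·ξ) = N·(u·ξ) ∈ H²(ℂ₋); moreover multiplication by D is injective on L² of the critical line. -/

import Mathlib

open Complex MeasureTheory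

/-- Boundary-value model of the Hardy space of the right half-plane `Re z > 1/2`. -/
noncomputable def HardyPlus : Set (ℂ → ℂ) :=
  {f | DifferentiableOn ℂ f {z : ℂ | 1 / 2 < z.re} ∧
    ∃ C : ℝ, ∀ x : ℝ, 1 / 2 < x →
      (∫ s : ℝ, (‖f ((x : ℂ) + (s : ℂ) * Complex.I)‖) ^ 2) ≤ C}

/-- Boundary-value model of the Hardy space of the left half-plane `Re z < 1/2`. -/
noncomputable def HardyMinus : Set (ℂ → ℂ) :=
  {f | DifferentiableOn ℂ f {z : ℂ | z.re < 1 / 2} ∧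
    ∃ C : ℝ, ∀ x : ℝ, x < 1 / 2 →
      (∫ s : ℝ, (‖f ((x : ℂ) + (s : ℂ) * Complex.I)‖) ^ 2) ≤ C}

/-- Bounded holomorphic functions on the right half-plane. -/
noncomputable def HinftyPlus : Set (ℂ → ℂ) :=
  {f | DifferentiableOn ℂ f {z : ℂ | 1 / 2 < z.re} ∧
    ∃ C : ℝ, ∀ z : ℂ, 1 / 2 < z.re → ‖f z‖ ≤ C}

/-- Bounded holomorphic functions on the left half-plane. -/
noncomputable def HinftyMinus : Set (ℂ → ℂ) :=
  {f | DifferentiableOn ℂ f {z : ℂ | z.re < 1 / 2} ∧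
    ∃ C : ℝ, ∀ z : ℂ, z.re < 1 / 2 → ‖f z‖ ≤ C}

lemma abs_natCast_cpow (p : ℕ) (hp : 0 < p) (w : ℂ) :
    ‖(p:ℂ) ^ w‖ = (p:ℝ) ^ w.re := by
  rw [← Complex.ofReal_natCast]
  exact Complex.norm_cpow_eq_rpow_re_of_pos (by exact_mod_cast hp) w

lemma hardy_key (g w : ℝ → ℝ) (δ M C : ℝ) (hδ : 0 < δ) (hC0 : 0 ≤ C) (hM0 : 0 ≤ M)
    (hgl : ∀ s, δ ≤ g s) (hgu : ∀ s, g s ≤ M) (hg : Continuous g)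
    (hC : (∫ s, (w s) ^ 2) ≤ C) :
    (∫ s, (g s * w s) ^ 2) ≤ M ^ 2 * C := by
  by_cases hint : Integrable (fun s => (w s)^2)
  · calc (∫ s, (g s * w s) ^ 2) ≤ ∫ s, M^2 * (w s)^2 := by
          apply integral_mono_of_nonneg (Filter.Eventually.of_forall fun s => sq_nonneg _)
            (hint.const_mul _) (Filter.Eventually.of_forall fun s => ?_)
          have h1 : (g s)^2 ≤ M^2 := by nlinarith [hgl s, hgu s]
          calc (g s * w s)^2 = (g s)^2 * (w s)^2 := by ring
            _ ≤ M^2 * (w s)^2 := mul_le_mul_of_nonneg_right h1 (sq_nonneg _)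
      _ = M^2 * ∫ s, (w s)^2 := by
          simpa using integral_smul (M^2) (fun s => (w s)^2)
      _ ≤ M^2 * C := by nlinarith
  · have hnh : ¬ Integrable (fun s => (g s * w s)^2) := by
      intro hh
      apply hint
      have hfe : (fun s => (w s)^2) = fun s => (g s * w s)^2 / (g s)^2 := by
        funext s
        have hg0 : g s ≠ 0 := by nlinarith [hgl s]
        field_simp
      rw [hfe]
      apply Integrable.mono' (hh.const_mul ((δ^2)⁻¹))
        ((hh.aestronglyMeasurable.aemeasurable.div ((hg.pow 2).aemeasurable)).aestronglyMeasurable)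
      refine Filter.Eventually.of_forall fun s => ?_
      have h1 : (0:ℝ) < δ^2 := by positivity
      have h2 : δ^2 ≤ (g s)^2 := by nlinarith [hgl s]
      have h3 : (0:ℝ) ≤ (g s * w s)^2 := sq_nonneg _
      show ‖(g s * w s)^2 / (g s)^2‖ ≤ (δ^2)⁻¹ * (g s * w s)^2
      rw [Real.norm_of_nonneg (by positivity), inv_mul_eq_div]
      exact div_le_div_of_nonneg_left h3 h1 h2
    rw [integral_undef hnh]
    positivity

set_option maxHeartbeats 1000000 in
theorem stmt19 (F F' : Finset ℕ) (hFF' : F ⊆ F') (hprime : ∀ p ∈ F', Nat.Prime p)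
    (u ξ : ℂ → ℂ) (hξ : ξ ∈ HardyPlus) (huξ : (fun z => u z * ξ z) ∈ HardyMinus)
    (D N : ℂ → ℂ)
    (hD : D = fun z => ∏ p ∈ F' \ F, (1 - (p : ℂ) ^ (-z)))
    (hN : N = fun z => ∏ p ∈ F' \ F, (1 - (p : ℂ) ^ (z - 1))) :
    D ∈ HinftyPlus ∧ N ∈ HinftyMinus ∧
    (fun z => D z * ξ z) ∈ HardyPlus ∧
    (∀ z : ℂ, D z ≠ 0 → (u z * N z / D z) * (D z * ξ z) = N z * (u z * ξ z)) ∧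
    (fun z => N z * (u z * ξ z)) ∈ HardyMinus ∧
    (∀ f : ℝ → ℂ,
      (∀ᵐ s : ℝ, D ((1 : ℂ) / 2 + (s : ℂ) * Complex.I) * f s = 0) →
      ∀ᵐ s : ℝ, f s = 0) := by
  subst hD hN
  set T := F' \ F with hT
  have hpT : ∀ p ∈ T, Nat.Prime p := fun p hp => hprime p (Finset.mem_sdiff.mp hp).1
  have hre : ∀ (x s : ℝ), (((x:ℂ)) + (s:ℂ)*Complex.I).re = x := by intro x s; simp
  have habs_neg : ∀ p ∈ T, ∀ z : ℂ, ‖(p:ℂ)^(-z)‖ = (p:ℝ)^(-z.re) := by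
    intro p hp z; rw [abs_natCast_cpow p (hpT p hp).pos]; simp
  have habs_pos : ∀ p ∈ T, ∀ z : ℂ, ‖(p:ℂ)^(z-1)‖ = (p:ℝ)^(z.re-1) := by
    intro p hp z; rw [abs_natCast_cpow p (hpT p hp).pos]; simp
  have hlt1 : ∀ p ∈ T, ∀ t : ℝ, t < 0 → (p:ℝ)^t < 1 := fun p hp t ht =>
    Real.rpow_lt_one_of_one_lt_of_neg (by exact_mod_cast (hpT p hp).one_lt) ht
  have hDdiff : Differentiable ℂ (fun z : ℂ => ∏ p ∈ T, (1 - (p:ℂ)^(-z))) := by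
    apply Differentiable.fun_finsetProd
    intro p hp
    have hp0 : ((p:ℂ)) ≠ 0 := by exact_mod_cast (hpT p hp).ne_zero
    exact (differentiable_const _).sub
      (Differentiable.const_cpow differentiable_neg (Or.inl hp0))
  have hNdiff : Differentiable ℂ (fun z : ℂ => ∏ p ∈ T, (1 - (p:ℂ)^(z-1))) := by
    apply Differentiable.fun_finsetProd
    intro p hp
    have hp0 : ((p:ℂ)) ≠ 0 := by exact_mod_cast (hpT p hp).ne_zero
    exact (differentiable_const _).sub
      (Differentiable.const_cpow (differentiable_id.sub_const 1) (Or.inl hp0))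
  -- factor bounds
  have hfacD : ∀ p ∈ T, ∀ z : ℂ, 1/2 ≤ z.re →
      ‖1 - (p:ℂ)^(-z)‖ ≤ 2 ∧ 1 - (p:ℝ)^(-z.re) ≤ ‖1 - (p:ℂ)^(-z)‖
        ∧ (p:ℝ)^(-z.re) < 1 := by
    intro p hp z hz
    have h1 : (p:ℝ)^(-z.re) < 1 := hlt1 p hp _ (by linarith)
    have h2 : ‖(p:ℂ)^(-z)‖ = (p:ℝ)^(-z.re) := habs_neg p hp z
    refine ⟨?_, ?_, h1⟩
    · have h3 := norm_sub_le (1:ℂ) ((p:ℂ)^(-z))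
      simp only [norm_one] at h3
      rw [h2] at h3
      linarith
    · have h4 := norm_sub_norm_le (1:ℂ) ((p:ℂ)^(-z))
      simp only [norm_one] at h4
      rw [h2] at h4
      linarith
  have hfacN : ∀ p ∈ T, ∀ z : ℂ, z.re ≤ 1/2 →
      ‖1 - (p:ℂ)^(z-1)‖ ≤ 2 ∧ 1 - (p:ℝ)^(z.re-1) ≤ ‖1 - (p:ℂ)^(z-1)‖
        ∧ (p:ℝ)^(z.re-1) < 1 := by
    intro p hp z hz
    have h1 : (p:ℝ)^(z.re-1) < 1 := hlt1 p hp _ (by linarith)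
    have h2 : ‖(p:ℂ)^(z-1)‖ = (p:ℝ)^(z.re-1) := habs_pos p hp z
    refine ⟨?_, ?_, h1⟩
    · have h3 := norm_sub_le (1:ℂ) ((p:ℂ)^(z-1))
      simp only [norm_one] at h3
      rw [h2] at h3
      linarith
    · have h4 := norm_sub_norm_le (1:ℂ) ((p:ℂ)^(z-1))
      simp only [norm_one] at h4
      rw [h2] at h4
      linarith
  -- product bounds
  have hDub : ∀ z : ℂ, 1/2 ≤ z.re →
      ‖∏ p ∈ T, (1 - (p:ℂ)^(-z))‖ ≤ 2 ^ T.card := by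
    intro z hz
    rw [norm_prod]
    refine le_trans (Finset.prod_le_prod (fun p _ => norm_nonneg _)
      (fun p hp => (hfacD p hp z hz).1)) ?_
    rw [Finset.prod_const]
  have hNub : ∀ z : ℂ, z.re ≤ 1/2 →
      ‖∏ p ∈ T, (1 - (p:ℂ)^(z-1))‖ ≤ 2 ^ T.card := by
    intro z hz
    rw [norm_prod]
    refine le_trans (Finset.prod_le_prod (fun p _ => norm_nonneg _)
      (fun p hp => (hfacN p hp z hz).1)) ?_
    rw [Finset.prod_const]
  have hDlb : ∀ z : ℂ, 1/2 ≤ z.re →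
      (∏ p ∈ T, (1 - (p:ℝ)^(-z.re))) ≤ ‖∏ p ∈ T, (1 - (p:ℂ)^(-z))‖ := by
    intro z hz
    rw [norm_prod]
    exact Finset.prod_le_prod (fun p hp => by linarith [(hfacD p hp z hz).2.2])
      (fun p hp => (hfacD p hp z hz).2.1)
  have hNlb : ∀ z : ℂ, z.re ≤ 1/2 →
      (∏ p ∈ T, (1 - (p:ℝ)^(z.re-1))) ≤ ‖∏ p ∈ T, (1 - (p:ℂ)^(z-1))‖ := by
    intro z hz
    rw [norm_prod]
    exact Finset.prod_le_prod (fun p hp => by linarith [(hfacN p hp z hz).2.2])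
      (fun p hp => (hfacN p hp z hz).2.1)
  have hMpos : (0:ℝ) ≤ 2 ^ T.card := by positivity
  obtain ⟨hξd, Cξ, hCξ⟩ := hξ
  obtain ⟨huξd, Cu, hCu⟩ := huξ
  have hCξ0 : 0 ≤ Cξ := le_trans (integral_nonneg fun s => sq_nonneg _) (hCξ 1 (by norm_num))
  have hCu0 : 0 ≤ Cu := le_trans (integral_nonneg fun s => sq_nonneg _) (hCu 0 (by norm_num))
  refine ⟨⟨hDdiff.differentiableOn, 2 ^ T.card, fun z hz => hDub z (le_of_lt hz)⟩,
    ⟨hNdiff.differentiableOn, 2 ^ T.card, fun z hz => hNub z (le_of_lt hz)⟩, ?_, ?_, ?_, ?_⟩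
  · -- D ξ ∈ HardyPlus
    refine ⟨hDdiff.differentiableOn.mul hξd, ((2:ℝ) ^ T.card)^2 * Cξ, fun x hx => ?_⟩
    have hδ : 0 < ∏ p ∈ T, (1 - (p:ℝ)^(-x)) := by
      apply Finset.prod_pos
      intro p hp
      have := hlt1 p hp (-x) (by linarith)
      linarith
    have key := hardy_key
      (fun s => ‖∏ p ∈ T, (1 - (p:ℂ)^(-((x:ℂ) + (s:ℂ)*Complex.I)))‖)
      (fun s => ‖ξ ((x:ℂ) + (s:ℂ)*Complex.I)‖)
      (∏ p ∈ T, (1 - (p:ℝ)^(-x))) (2 ^ T.card) Cξ hδ hCξ0 hMpos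
      (fun s => by
        have := hDlb ((x:ℂ) + (s:ℂ)*Complex.I) (by rw [hre]; linarith)
        rwa [hre] at this)
      (fun s => hDub _ (by rw [hre]; linarith))
      (continuous_norm.comp (hDdiff.continuous.comp (continuous_const.add (Complex.continuous_ofReal.mul continuous_const))))
      (hCξ x hx)
    simpa [map_mul] using key
  · intro z hz
    field_simp
  · -- N (u ξ) ∈ HardyMinus
    refine ⟨hNdiff.differentiableOn.mul huξd, ((2:ℝ) ^ T.card)^2 * Cu, fun x hx => ?_⟩
    have hδ : 0 < ∏ p ∈ T, (1 - (p:ℝ)^(x-1)) := by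
      apply Finset.prod_pos
      intro p hp
      have := hlt1 p hp (x-1) (by linarith)
      linarith
    have key := hardy_key
      (fun s => ‖∏ p ∈ T, (1 - (p:ℂ)^(((x:ℂ) + (s:ℂ)*Complex.I) - 1))‖)
      (fun s => ‖u ((x:ℂ) + (s:ℂ)*Complex.I) * ξ ((x:ℂ) + (s:ℂ)*Complex.I)‖)
      (∏ p ∈ T, (1 - (p:ℝ)^(x-1))) (2 ^ T.card) Cu hδ hCu0 hMpos
      (fun s => by
        have := hNlb ((x:ℂ) + (s:ℂ)*Complex.I) (by rw [hre]; linarith)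
        rwa [hre] at this)
      (fun s => hNub _ (by rw [hre]; linarith))
      (continuous_norm.comp (hNdiff.continuous.comp (continuous_const.add (Complex.continuous_ofReal.mul continuous_const))))
      (hCu x hx)
    simpa [map_mul] using key
  · -- injectivity
    intro f hf
    filter_upwards [hf] with s hs
    have hne : (∏ p ∈ T, (1 - (p:ℂ)^(-((1:ℂ)/2 + (s:ℂ)*Complex.I)))) ≠ 0 := by
      apply Finset.prod_ne_zero_iff.mpr
      intro p hp
      apply sub_ne_zero.mpr
      intro h
      have habs : ‖(p:ℂ)^(-((1:ℂ)/2 + (s:ℂ)*Complex.I))‖ < 1 := by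
        rw [habs_neg p hp]
        apply hlt1 p hp
        have hre2 : ((1:ℂ)/2 + (s:ℂ)*Complex.I).re = 1/2 := by
          simp [Complex.add_re, Complex.mul_re]
        rw [hre2]; norm_num
      rw [← h] at habs
      simp at habs
    rcases mul_eq_zero.mp hs with h | h
    · exact absurd h hne
    · exact h
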